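/- Let t > 0 and a ∈ ℝ. Consider admissible functions f : ℝ → ℝ of the form f(τ) = ∫_0^τ g(s) ds for some measurable, essentially bounded g : ℝ → ℝ (so f is absolutely continuous with f(0) = 0), subject to the constraint ∫_0^t f(τ) dτ = a. Then the infimum of ∫_0^t f(τ)² dτ over all admissible f equals a²/t, and if a ≠ 0 this infimum is not attained by any admissible f. (The computation of the minimal 2-jet in the Martinet example: the value function equals (1/t)(c⁽¹⁾ − b⁽¹⁾_y)² and the minimum is never attained.) -/

import Mathlib

open MeasureTheory

noncomputable section

/-- An admissible function: `f(τ) = ∫_0^τ g(s) ds` for some measurable,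
essentially bounded `g : ℝ → ℝ`, so that `f` is absolutely continuous with
`f 0 = 0`. -/
def Admissible (f : ℝ → ℝ) : Prop :=
  ∃ g : ℝ → ℝ, Measurable g ∧ (∃ C : ℝ, ∀ᵐ s : ℝ, |g s| ≤ C) ∧
    ∀ τ : ℝ, f τ = ∫ s in (0:ℝ)..τ, g s

/-! For continuous `f` with `∫₀ᵗ f = a`, expanding the square gives
`∫₀ᵗ (f - a/t)² = ∫₀ᵗ f² - a²/t`, so `a²/t` is a lower bound, reached only by the constant
`a/t`; since admissible functions vanish at `0`, it is not reached when `a ≠ 0`.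
The ramps `τ ↦ k · min τ δ`, scaled so that `∫₀ᵗ f = a`, cost `a²(t - 2δ/3)/(t - δ/2)²`,
which tends to `a²/t` as `δ → 0⁺`. -/

open Set Filter Topology intervalIntegral

section IntervalIntegral

variable {f φ : ℝ → ℝ} {a b c δ : ℝ}

theorem integral_sub_const_sq (hf : Continuous f) :
    ∫ x in a..b, (f x - c) ^ 2
      = (∫ x in a..b, f x ^ 2) - 2 * c * (∫ x in a..b, f x) + c ^ 2 * (b - a) := by
  have hf2 : IntervalIntegrable (fun x => f x ^ 2) volume a b :=
    (hf.pow 2).intervalIntegrable a b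
  have hcf : IntervalIntegrable (fun x => 2 * c * f x) volume a b :=
    (continuous_const.mul hf).intervalIntegrable a b
  have hexp : (fun x => (f x - c) ^ 2) = fun x => (f x ^ 2 - 2 * c * f x) + c ^ 2 := by
    ext x; ring
  rw [hexp, integral_add (hf2.sub hcf) intervalIntegrable_const, integral_sub hf2 hcf,
    intervalIntegral.integral_const_mul, intervalIntegral.integral_const, smul_eq_mul]
  ring

theorem integral_sub_mean_sq (hf : Continuous f) (hab : a ≠ b) :
    ∫ x in a..b, (f x - (∫ y in a..b, f y) / (b - a)) ^ 2
      = (∫ x in a..b, f x ^ 2) - (∫ x in a..b, f x) ^ 2 / (b - a) := by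
  have : b - a ≠ 0 := sub_ne_zero.mpr hab.symm
  rw [integral_sub_const_sq hf]
  field_simp
  ring

theorem sq_integral_div_le_integral_sq (hf : Continuous f) (hab : a < b) :
    (∫ x in a..b, f x) ^ 2 / (b - a) ≤ ∫ x in a..b, f x ^ 2 := by
  have h := integral_nonneg (μ := volume) hab.le fun x _ =>
    sq_nonneg (f x - (∫ y in a..b, f y) / (b - a))
  rw [integral_sub_mean_sq hf hab.ne] at h
  linarith

theorem Continuous.eqOn_zero_of_integral_eq_zero (hf : Continuous f) (hf0 : 0 ≤ f)
    (hab : a < b) (h : ∫ x in a..b, f x = 0) : EqOn f 0 (Icc a b) := by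
  rw [integral_eq_zero_iff_of_le_of_nonneg_ae hab.le (.of_forall hf0)
    (hf.intervalIntegrable a b), Measure.restrict_congr_set Ioc_ae_eq_Icc] at h
  exact Measure.eqOn_Icc_of_ae_eq volume hab.ne h hf.continuousOn continuousOn_const

theorem eqOn_mean_of_integral_sq_eq (hf : Continuous f) (hab : a < b)
    (h : ∫ x in a..b, f x ^ 2 = (∫ x in a..b, f x) ^ 2 / (b - a)) :
    EqOn f (fun _ => (∫ y in a..b, f y) / (b - a)) (Icc a b) := by
  have hzero := (hf.sub continuous_const).pow 2 |>.eqOn_zero_of_integral_eq_zero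
    (fun x => sq_nonneg (f x - (∫ y in a..b, f y) / (b - a))) hab
    (by simp only [Pi.pow_apply, Pi.sub_apply]; rw [integral_sub_mean_sq hf hab.ne, h, sub_self])
  intro x hx
  simpa [sub_eq_zero] using hzero hx

theorem integral_comp_min (hφ : Continuous φ) (haδ : a ≤ δ) (hδb : δ ≤ b) :
    ∫ x in a..b, φ (min x δ) = (∫ x in a..δ, φ x) + (b - δ) * φ δ := by
  have hc : Continuous fun x => φ (min x δ) := hφ.comp (continuous_id.min continuous_const)
  have hleft : ∫ x in a..δ, φ (min x δ) = ∫ x in a..δ, φ x :=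
    integral_congr fun x hx => by rw [uIcc_of_le haδ] at hx; simp [min_eq_left hx.2]
  have hright : ∫ x in δ..b, φ (min x δ) = ∫ _ in δ..b, φ δ :=
    integral_congr fun x hx => by rw [uIcc_of_le hδb] at hx; simp [min_eq_right hx.1]
  rw [← integral_add_adjacent_intervals (hc.intervalIntegrable a δ) (hc.intervalIntegrable δ b),
    hleft, hright, intervalIntegral.integral_const, smul_eq_mul]

end IntervalIntegral

namespace Admissible

variable {f : ℝ → ℝ}

theorem continuous (hf : Admissible f) : Continuous f := by
  obtain ⟨g, hg, ⟨C, hC⟩, hfg⟩ := hf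
  have hgi (a b : ℝ) : IntervalIntegrable g volume a b :=
    intervalIntegrable_const.mono_fun' hg.aestronglyMeasurable (ae_restrict_of_ae hC)
  rw [funext hfg]
  exact continuous_primitive hgi 0

theorem apply_zero (hf : Admissible f) : f 0 = 0 := by
  obtain ⟨g, -, -, hfg⟩ := hf
  simpa using hfg 0

theorem const_mul (hf : Admissible f) (k : ℝ) : Admissible fun τ => k * f τ := by
  obtain ⟨g, hg, ⟨C, hC⟩, hfg⟩ := hf
  refine ⟨fun s => k * g s, hg.const_mul k, ⟨|k| * C, ?_⟩, fun τ => ?_⟩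
  · filter_upwards [hC] with s hs
    rw [abs_mul]
    exact mul_le_mul_of_nonneg_left hs (abs_nonneg k)
  · simp only [hfg τ, intervalIntegral.integral_const_mul]

end Admissible

theorem admissible_min_const {δ : ℝ} (hδ : 0 ≤ δ) : Admissible fun τ => min τ δ := by
  refine ⟨indicator {s | s ≤ δ} 1, measurable_one.indicator measurableSet_Iic,
    ⟨1, .of_forall fun s => ?_⟩, fun τ => ?_⟩
  · by_cases hs : s ≤ δ <;> simp [hs]
  show min τ δ = _
  rcases le_or_gt τ δ with hτ | hτ
  · rw [min_eq_left hτ, integral_congr (g := fun _ => 1) fun s hs => ?_]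
    · simp
    · exact indicator_of_mem (f := 1) (hs.2.trans (max_le hδ hτ))
  · rw [min_eq_right hτ.le, integral_indicator ⟨hδ, hτ.le⟩]
    simp

theorem exists_admissible_ramp (a : ℝ) {t δ : ℝ} (hδ : 0 < δ) (hδt : δ ≤ t) :
    ∃ f, Admissible f ∧ ∫ τ in (0:ℝ)..t, f τ = a ∧
      ∫ τ in (0:ℝ)..t, f τ ^ 2 = a ^ 2 * (t - 2 * δ / 3) / (t - δ / 2) ^ 2 := by
  have hden : δ * (t - δ / 2) ≠ 0 := by nlinarith
  have hramp : ∫ τ in (0:ℝ)..t, min τ δ = δ * (t - δ / 2) := by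
    rw [integral_comp_min (φ := fun x => x) continuous_id hδ.le hδt, integral_id]
    ring
  have hramp_sq : ∫ τ in (0:ℝ)..t, min τ δ ^ 2 = δ ^ 2 * (t - 2 * δ / 3) := by
    rw [integral_comp_min (φ := (· ^ 2)) (continuous_pow 2) hδ.le hδt, integral_pow]
    ring
  refine ⟨fun τ => a / (δ * (t - δ / 2)) * min τ δ,
    (admissible_min_const hδ.le).const_mul _, ?_, ?_⟩
  · rw [intervalIntegral.integral_const_mul, hramp, div_mul_cancel₀ _ hden]
  · simp_rw [mul_pow]
    rw [intervalIntegral.integral_const_mul, hramp_sq]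
    field_simp

/-- **The Martinet computation.** For `t > 0` and `a ∈ ℝ`, the infimum of
`∫_0^t f(τ)² dτ` over admissible `f` with `∫_0^t f(τ) dτ = a` equals `a²/t`,
and for `a ≠ 0` this infimum is not attained by any admissible `f`. -/
theorem martinet_minimal_two_jet (t : ℝ) (ht : 0 < t) (a : ℝ) :
    sInf { c : ℝ | ∃ f : ℝ → ℝ, Admissible f ∧
        (∫ τ in (0:ℝ)..t, f τ) = a ∧ (∫ τ in (0:ℝ)..t, (f τ) ^ 2) = c }
      = a ^ 2 / t ∧
    (a ≠ 0 → a ^ 2 / t ∉ { c : ℝ | ∃ f : ℝ → ℝ, Admissible f ∧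
        (∫ τ in (0:ℝ)..t, f τ) = a ∧ (∫ τ in (0:ℝ)..t, (f τ) ^ 2) = c }) := by
  set S := { c : ℝ | ∃ f : ℝ → ℝ, Admissible f ∧
    (∫ τ in (0:ℝ)..t, f τ) = a ∧ (∫ τ in (0:ℝ)..t, (f τ) ^ 2) = c }
  have hlower : ∀ c ∈ S, a ^ 2 / t ≤ c := by
    rintro c ⟨f, hf, rfl, rfl⟩
    simpa using sq_integral_div_le_integral_sq hf.continuous ht
  have hramp : ∀ δ ∈ Ioc 0 t, a ^ 2 * (t - 2 * δ / 3) / (t - δ / 2) ^ 2 ∈ S :=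
    fun δ hδ => exists_admissible_ramp a hδ.1 hδ.2
  have hlim : Tendsto (fun δ => a ^ 2 * (t - 2 * δ / 3) / (t - δ / 2) ^ 2) (𝓝[>] 0)
      (𝓝 (a ^ 2 / t)) := by
    have hcont : ContinuousAt (fun δ => a ^ 2 * (t - 2 * δ / 3) / (t - δ / 2) ^ 2) 0 := by
      fun_prop (disch := simp [ht.ne'])
    convert hcont.tendsto.mono_left nhdsWithin_le_nhds using 2
    field_simp
    ring
  refine ⟨le_antisymm ?_ (le_csInf ⟨_, hramp t ⟨ht, le_rfl⟩⟩ hlower), ?_⟩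
  · refine ge_of_tendsto hlim ?_
    filter_upwards [Ioc_mem_nhdsGT ht] with δ hδ
    exact csInf_le ⟨_, hlower⟩ (hramp δ hδ)
  · rintro ha ⟨f, hf, rfl, hmin⟩
    have hconst := eqOn_mean_of_integral_sq_eq hf.continuous ht (by simpa using hmin)
    have h0 := hconst (left_mem_Icc.mpr ht.le)
    simp only [hf.apply_zero, sub_zero] at h0
    exact ha (by simpa [ht.ne'] using h0.symm)
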